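/- Let ξ¹ and ξ² be measure-valued martingales with values in P_1(ℝ^d), let 0 ≤ s ≤ t, and let ν be an F_t-measurable random probability measure on ℝ^d × ℝ^d whose first and second marginals are almost surely ξ¹_t and ξ²_t respectively. Then there exists an F_s-measurable random probability measure ν_s on ℝ^d × ℝ^d such that for every bounded Borel function f : ℝ^d × ℝ^d → ℝ one has ∫ f dν_s = E[∫ f dν | F_s] almost surely; and any such ν_s has first marginal ξ¹_s and second marginal ξ²_s almost surely. -/

import Mathlib

open MeasureTheory ProbabilityTheory Filter Topology NNReal ENNReal

noncomputable section

abbrev Euc (d : ℕ) := EuclideanSpace ℝ (Fin d)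

def HasMomentP {E : Type*} [NormedAddCommGroup E] [MeasurableSpace E] (p : ℝ) (μ : Measure E) : Prop :=
  ∫⁻ x, (‖x‖₊ : ℝ≥0∞) ^ p ∂μ ≠ ⊤

def IsMVM {Ω E : Type*} [mΩ : MeasurableSpace Ω] [MeasurableSpace E]
    (ℱ : Filtration ℝ≥0 mΩ) (P : Measure Ω) (ξ : ℝ≥0 → Ω → Measure E) : Prop :=
  (∀ t ω, IsProbabilityMeasure (ξ t ω)) ∧
  ∀ A : Set E, MeasurableSet A →
    Martingale (fun t ω => (ξ t ω A).toReal) ℱ P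

/-- A `G`-measurable random probability measure on `X`. -/
def IsRandomProbMeasure {Ω X : Type*} [MeasurableSpace X]
    (G : MeasurableSpace Ω) (ν : Ω → Measure X) : Prop :=
  (∀ ω, IsProbabilityMeasure (ν ω)) ∧
  ∀ B : Set X, MeasurableSet B → Measurable[G] fun ω => ν ω B

lemma countable_generatePiSystem' {α : Type*} {S : Set (Set α)} (hS : S.Countable) :
    (generatePiSystem S).Countable := by
  refine ((Set.countable_setOf_finite_subset hS).image Set.sInter).mono ?_
  intro s hs
  induction hs with
  | base h =>
    exact ⟨{_}, ⟨Set.finite_singleton _, Set.singleton_subset_iff.2 h⟩, Set.sInter_singleton _⟩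
  | inter hs ht hne ihs iht =>
    obtain ⟨F, ⟨hFf, hFS⟩, rfl⟩ := ihs
    obtain ⟨G, ⟨hGf, hGS⟩, rfl⟩ := iht
    exact ⟨F ∪ G, ⟨hFf.union hGf, Set.union_subset hFS hGS⟩, Set.sInter_union F G⟩

lemma integrableOn_of_integrable {α E : Type*} {mα : MeasurableSpace α} [NormedAddCommGroup E]
    {f : α → E} {μ : Measure α} (h : Integrable f μ) (s : Set α) : IntegrableOn f s μ :=
  h.integrableOn

lemma aux_exists {Ω X : Type*} [mΩ : MeasurableSpace Ω] [mX : MeasurableSpace X]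
    [StandardBorelSpace X] [Nonempty X]
    (P : Measure Ω) [IsProbabilityMeasure P] {m : MeasurableSpace Ω} (hm : m ≤ mΩ)
    (ν : Ω → Measure X) (hprob : ∀ ω, IsProbabilityMeasure (ν ω))
    (hmeas : ∀ B : Set X, MeasurableSet B → Measurable[mΩ] fun ω => ν ω B) :
    ∃ νs : Ω → Measure X, (∀ ω, IsProbabilityMeasure (νs ω)) ∧
      (∀ B : Set X, MeasurableSet B → Measurable[m] fun ω => νs ω B) ∧
      ∀ f : X → ℝ, Measurable f → ∀ C : ℝ, (∀ z, |f z| ≤ C) →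
        (fun ω => ∫ z, f z ∂(νs ω)) =ᵐ[P] P[(fun ω => ∫ z, f z ∂(ν ω)) | m] := by
  let κ : @Kernel Ω X mΩ mX :=
    @Kernel.mk Ω X mΩ mX ν (@Measure.measurable_of_measurable_coe X Ω mX mΩ ν hmeas)
  have hκapp : ∀ ω, κ ω = ν ω := fun ω => rfl
  haveI : IsMarkovKernel κ := ⟨fun ω => by rw [hκapp]; exact hprob ω⟩
  have hle : m.prod mX ≤ @Prod.instMeasurableSpace Ω X mΩ mX := by
    rw [show (@Prod.instMeasurableSpace Ω X mΩ mX) = mΩ.prod mX from rfl,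
      MeasurableSpace.prod, MeasurableSpace.prod]
    exact sup_le_sup (MeasurableSpace.comap_mono hm) le_rfl
  set μ := Measure.compProd P κ with hμdef
  haveI hμprob : IsProbabilityMeasure μ := by rw [hμdef]; infer_instance
  set ρ : @Measure (Ω × X) (m.prod mX) := μ.trim hle with hρdef
  haveI hρfin : IsFiniteMeasure ρ := by rw [hρdef]; exact isFiniteMeasure_trim hle
  set νs : @Kernel Ω X m mX := Measure.condKernel (mα := m) ρ with hνsdef
  haveI hνsM : IsMarkovKernel νs := by
    rw [hνsdef]; exact Measure.instIsMarkovKernelCondKernel (mα := m) ρ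
  set ρfst : @Measure Ω m := @Measure.fst Ω X m mX ρ with hρfstdef
  have hdis : Measure.compProd ρfst νs = ρ := by
    rw [hρfstdef, hνsdef]
    exact Measure.disintegrate (mα := m) ρ (Measure.condKernel (mα := m) ρ)
  have hfst : ρfst = P.trim hm := by
    refine @Measure.ext Ω m _ _ fun A hA => ?_
    calc ρfst A = ρ (Prod.fst ⁻¹' A) := Measure.fst_apply (ρ := ρ) hA
    _ = μ (Prod.fst ⁻¹' A) := trim_measurableSet_eq hle ((@measurable_fst Ω X m mX) hA)
    _ = μ (A ×ˢ Set.univ) := by rw [Set.prod_univ]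
    _ = ∫⁻ a in A, κ a Set.univ ∂P :=
        Measure.compProd_apply_prod (μ := P) (κ := κ) (hm A hA) MeasurableSet.univ
    _ = P A := by simp [measure_univ]
    _ = P.trim hm A := (trim_measurableSet_eq hm hA).symm
  refine ⟨fun ω => νs ω, fun ω => hνsM.isProbabilityMeasure ω,
    fun B hB => @Kernel.measurable_coe Ω X m mX νs B hB, ?_⟩
  intro f hf C hC
  have hbound : ∀ (μ' : Measure X), IsProbabilityMeasure μ' → ‖∫ z, f z ∂μ'‖ ≤ C := by
    intro μ' hμ'
    calc ‖∫ z, f z ∂μ'‖ ≤ C * (μ' Set.univ).toReal :=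
      norm_integral_le_of_norm_le_const (Eventually.of_forall fun z => by
        rw [Real.norm_eq_abs]; exact hC z)
    _ = C := by simp [measure_univ]
  have hFsm : StronglyMeasurable[m.prod mX] (fun p : Ω × X => f p.2) :=
    (hf.comp (@measurable_snd Ω X m mX)).stronglyMeasurable
  have hFsm' : StronglyMeasurable[mΩ.prod mX] (fun p : Ω × X => f p.2) :=
    (hf.comp (@measurable_snd Ω X mΩ mX)).stronglyMeasurable
  have hg_sm : StronglyMeasurable[m] (fun ω => ∫ z, f z ∂(νs ω)) :=
    hFsm.integral_kernel_prod_right' (κ := νs)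
  have hG_sm : StronglyMeasurable[mΩ] (fun ω => ∫ z, f z ∂(ν ω)) := by
    have h := hFsm'.integral_kernel_prod_right' (κ := κ)
    simpa only [hκapp] using h
  have hG_int : Integrable (fun ω => ∫ z, f z ∂(ν ω)) P :=
    ⟨hG_sm.aestronglyMeasurable, HasFiniteIntegral.of_bounded (C := C)
      (Eventually.of_forall fun ω => hbound _ (hprob ω))⟩
  have hg_int : Integrable (fun ω => ∫ z, f z ∂(νs ω)) P :=
    ⟨(hg_sm.mono hm).aestronglyMeasurable, HasFiniteIntegral.of_bounded (C := C)
      (Eventually.of_forall fun ω => hbound _ (hνsM.isProbabilityMeasure ω))⟩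
  haveI : SigmaFinite (P.trim hm) := by
    haveI : IsFiniteMeasure (P.trim hm) := isFiniteMeasure_trim hm
    infer_instance
  have hFρ_int : Integrable (fun p : Ω × X => f p.2) ρ :=
    ⟨hFsm.aestronglyMeasurable, HasFiniteIntegral.of_bounded (C := C)
      (Eventually.of_forall fun p => by rw [Real.norm_eq_abs]; exact hC _)⟩
  have hFμ_int : Integrable (fun p : Ω × X => f p.2) μ :=
    ⟨hFsm'.aestronglyMeasurable, HasFiniteIntegral.of_bounded (C := C)
      (Eventually.of_forall fun p => by rw [Real.norm_eq_abs]; exact hC _)⟩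
  have h_up : AEStronglyMeasurable[m] (fun ω => ∫ z, f z ∂(νs ω)) P :=
    hg_sm.aestronglyMeasurable
  have h_io : ∀ A : Set Ω, MeasurableSet[m] A → P A < ⊤ →
      Integrable (fun ω => ∫ z, f z ∂(νs ω)) (P.restrict A) :=
    fun A _ _ => integrableOn_of_integrable hg_int A
  refine ae_eq_condExp_of_forall_setIntegral_eq hm hG_int h_io (fun A hA _ => ?_) h_up
  calc ∫ ω in A, (∫ z, f z ∂(νs ω)) ∂P
      = ∫ ω in A, (∫ z, f z ∂(νs ω)) ∂(P.trim hm) := setIntegral_trim hm hg_sm hA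
    _ = ∫ ω in A, (∫ z, f z ∂(νs ω)) ∂ρfst := by rw [hfst]
    _ = ∫ p in A ×ˢ Set.univ, f p.2 ∂(Measure.compProd ρfst νs) := by
        rw [Measure.setIntegral_compProd hA MeasurableSet.univ
          (by rw [hdis]; exact integrableOn_of_integrable hFρ_int _)]
        simp
    _ = ∫ p in A ×ˢ Set.univ, f p.2 ∂ρ := by rw [hdis]
    _ = ∫ p in A ×ˢ Set.univ, f p.2 ∂μ :=
        (setIntegral_trim hle hFsm
          ((MeasurableSet.prod (m := m) hA (MeasurableSet.univ (α := X))) :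
            @MeasurableSet (Ω × X) (m.prod mX) (A ×ˢ Set.univ))).symm
    _ = ∫ ω in A, (∫ z, f z ∂(ν ω)) ∂P := by
        rw [Measure.setIntegral_compProd (hm A hA) MeasurableSet.univ (integrableOn_of_integrable hFμ_int _)]
        simp [hκapp]

lemma aux_marg {Ω : Type*} [mΩ : MeasurableSpace Ω] {d : ℕ}
    (P : Measure Ω) [IsProbabilityMeasure P] (ℱ : Filtration ℝ≥0 mΩ)
    (ξ : ℝ≥0 → Ω → Measure (Euc d)) (h1 : IsMVM ℱ P ξ)
    (s t : ℝ≥0) (hst : s ≤ t)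
    (ν νs : Ω → Measure (Euc d × Euc d))
    (π : Euc d × Euc d → Euc d) (hπ : Measurable π)
    (hν : ∀ ω, IsProbabilityMeasure (ν ω)) (hνs : ∀ ω, IsProbabilityMeasure (νs ω))
    (hν1 : ∀ᵐ ω ∂P, (ν ω).map π = ξ t ω)
    (hcond : ∀ f : Euc d × Euc d → ℝ, Measurable f → (∃ C : ℝ, ∀ z, |f z| ≤ C) →
        (fun ω => ∫ z, f z ∂(νs ω)) =ᵐ[P] P[(fun ω => ∫ z, f z ∂(ν ω)) | ℱ s]) :
    ∀ᵐ ω ∂P, (νs ω).map π = ξ s ω := by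
  have key : ∀ A : Set (Euc d), MeasurableSet A →
      ∀ᵐ ω ∂P, (νs ω).map π A = ξ s ω A := by
    intro A hA
    set f : Euc d × Euc d → ℝ := (π ⁻¹' A).indicator 1 with hfdef
    have hfm : Measurable f := measurable_one.indicator (hπ hA)
    have hfb : ∀ z, |f z| ≤ 1 := fun z => by
      rw [hfdef]; by_cases h : z ∈ π ⁻¹' A <;> simp [h]
    have hcd := hcond f hfm ⟨1, hfb⟩
    have hind : ∀ (μ' : Measure (Euc d × Euc d)), ∫ z, f z ∂μ' = (μ' (π ⁻¹' A)).toReal :=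
      fun μ' => integral_indicator_one (hπ hA)
    have hmart := (h1.2 A hA).condExp_ae_eq hst
    have hcongr : P[(fun ω => ∫ z, f z ∂(ν ω)) | ℱ s]
        =ᵐ[P] P[(fun ω => (ξ t ω A).toReal) | ℱ s] := by
      refine condExp_congr_ae ?_
      filter_upwards [hν1] with ω hω
      show ∫ z, f z ∂(ν ω) = (ξ t ω A).toReal
      rw [hind, ← hω, Measure.map_apply hπ hA]
    filter_upwards [hcd, hcongr.trans hmart] with ω hω1 hω2
    have hval : (νs ω (π ⁻¹' A)).toReal = (ξ s ω A).toReal := by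
      rw [← hind (νs ω)]
      exact hω1.trans hω2
    rw [Measure.map_apply hπ hA]
    haveI := hνs ω; haveI := h1.1 s ω
    exact (ENNReal.toReal_eq_toReal_iff' (measure_ne_top _ _) (measure_ne_top _ _)).1 hval
  obtain ⟨B, hBc, -, hBb⟩ := TopologicalSpace.exists_countable_basis (Euc d)
  have hSc : (generatePiSystem B).Countable := countable_generatePiSystem' hBc
  have hgen : (inferInstance : MeasurableSpace (Euc d)) =
      MeasurableSpace.generateFrom (generatePiSystem B) := by
    rw [generateFrom_generatePiSystem_eq, ← hBb.borel_eq_generateFrom]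
    exact BorelSpace.measurable_eq
  have hmeasS : ∀ A ∈ generatePiSystem B, MeasurableSet A := by
    intro A hA
    have h2 : MeasurableSet[MeasurableSpace.generateFrom (generatePiSystem B)] A :=
      MeasurableSpace.measurableSet_generateFrom hA
    rwa [← hgen] at h2
  have hae := (ae_ball_iff hSc).2 fun A hA => key A (hmeasS A hA)
  filter_upwards [hae] with ω hω
  haveI := hνs ω
  haveI : IsProbabilityMeasure ((νs ω).map π) := Measure.isProbabilityMeasure_map hπ.aemeasurable
  haveI := h1.1 s ω
  exact MeasureTheory.ext_of_generate_finite _ hgen (isPiSystem_generatePiSystem B) hω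
    (by simp [measure_univ])

/-- Given an `F_t`-measurable random coupling `ν` of `(ξ¹_t, ξ²_t)`, there exists an
`F_s`-measurable random probability measure `ν_s` whose integrals of bounded Borel functions
are the conditional expectations given `F_s` of those of `ν`; and any such `ν_s` is a
coupling of `(ξ¹_s, ξ²_s)`. -/
theorem stmt10 {Ω : Type*} [mΩ : MeasurableSpace Ω] {d : ℕ}
    (P : Measure Ω) [IsProbabilityMeasure P] (ℱ : Filtration ℝ≥0 mΩ)
    (ξ1 ξ2 : ℝ≥0 → Ω → Measure (Euc d))
    (h1 : IsMVM ℱ P ξ1) (h2 : IsMVM ℱ P ξ2)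
    (hm1 : ∀ t ω, HasMomentP 1 (ξ1 t ω)) (hm2 : ∀ t ω, HasMomentP 1 (ξ2 t ω))
    (s t : ℝ≥0) (hst : s ≤ t)
    (ν : Ω → Measure (Euc d × Euc d))
    (hν : IsRandomProbMeasure (ℱ t) ν)
    (hν1 : ∀ᵐ ω ∂P, (ν ω).map Prod.fst = ξ1 t ω)
    (hν2 : ∀ᵐ ω ∂P, (ν ω).map Prod.snd = ξ2 t ω) :
    (∃ νs : Ω → Measure (Euc d × Euc d), IsRandomProbMeasure (ℱ s) νs ∧
      ∀ f : Euc d × Euc d → ℝ, Measurable f → (∃ C : ℝ, ∀ z, |f z| ≤ C) →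
        (fun ω => ∫ z, f z ∂(νs ω)) =ᵐ[P] P[(fun ω => ∫ z, f z ∂(ν ω)) | ℱ s]) ∧
    ∀ νs : Ω → Measure (Euc d × Euc d), IsRandomProbMeasure (ℱ s) νs →
      (∀ f : Euc d × Euc d → ℝ, Measurable f → (∃ C : ℝ, ∀ z, |f z| ≤ C) →
        (fun ω => ∫ z, f z ∂(νs ω)) =ᵐ[P] P[(fun ω => ∫ z, f z ∂(ν ω)) | ℱ s]) →
      (∀ᵐ ω ∂P, (νs ω).map Prod.fst = ξ1 s ω) ∧
      (∀ᵐ ω ∂P, (νs ω).map Prod.snd = ξ2 s ω) := by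
  constructor
  · obtain ⟨νs, hp, hmeas, hcond⟩ := aux_exists (m := (ℱ s : MeasurableSpace Ω)) P (ℱ.le s) ν hν.1
      (fun B hB => (hν.2 B hB).mono (ℱ.le t) le_rfl)
    exact ⟨νs, ⟨hp, hmeas⟩, fun f hf h => h.elim fun C hC => hcond f hf C hC⟩
  · intro νs hνs hcond
    exact ⟨aux_marg P ℱ ξ1 h1 s t hst ν νs Prod.fst measurable_fst hν.1 hνs.1 hν1 hcond,
           aux_marg P ℱ ξ2 h2 s t hst ν νs Prod.snd measurable_snd hν.1 hνs.1 hν2 hcond⟩
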